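/- arXiv:1011.1942 — 2 statements merged into one kernel-verified Lean document; each statement's English description precedes it below -/
import Mathlib

section
/- For each h ∈ ℤ/dℤ and each character index σ ∈ ℤ/dℤ, consider on ℂ^d the operator H^{h,σ} = -(|0⟩⟨0| + |h⟩⟨h| + |I⟩⟨I| + |σ⟩⟨σ|), where |σ⟩ = (1/√d)Σ_j ω^{σj}|j⟩ is a Fourier basis state and |I⟩ = |σ=0⟩. Then ‖H^{h,σ}‖ ≤ 2(1 + 1/√d), with equality if and only if (h,σ) = (0,0); in the case (h,σ)=(0,0) the minimum eigenvalue is -2(1+1/√d) with eigenvector |0⟩+|I⟩. -/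
/-- Rank-one operator `|u⟩⟨u| : x ↦ ⟨u,x⟩ u`. -/
noncomputable def rankOneProj {H : Type*} [NormedAddCommGroup H]
    [InnerProductSpace ℂ H] (u : H) : H →L[ℂ] H :=
  (innerSL ℂ u).smulRight u

/-- Computational basis state `|h⟩` of `ℂ^d`. -/
noncomputable def basisVec (d : ℕ) [NeZero d] (h : ZMod d) :
    EuclideanSpace ℂ (ZMod d) :=
  EuclideanSpace.single h 1

/-- Fourier basis state `|σ⟩ = (1/√d) Σ_j ω^(σ j) |j⟩` with `ω = exp(2πi/d)`. -/
noncomputable def fourierV (d : ℕ) [NeZero d] (σ : ZMod d) :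
    EuclideanSpace ℂ (ZMod d) :=
  WithLp.toLp 2 (fun j : ZMod d => (1 / Real.sqrt d : ℂ)
    * Complex.exp (2 * Real.pi * Complex.I / d) ^ (σ.val * j.val))

/-- The block Hamiltonian `H^{h,σ} = -(|0⟩⟨0| + |h⟩⟨h| + |I⟩⟨I| + |σ⟩⟨σ|)`. -/
noncomputable def blockHam (d : ℕ) [NeZero d] (h σ : ZMod d) :
    EuclideanSpace ℂ (ZMod d) →L[ℂ] EuclideanSpace ℂ (ZMod d) :=
  -(rankOneProj (basisVec d 0) + rankOneProj (basisVec d h)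
    + rankOneProj (fourierV d 0) + rankOneProj (fourierV d σ))


/-!
Split `H^{h,σ}` into the pairs `|0⟩⟨0| + |I⟩⟨I|` and `|h⟩⟨h| + |σ⟩⟨σ|`. For unit vectors `u`, `v`,
`‖(|u⟩⟨u| + |v⟩⟨v|) x‖² ≤ (1 + |⟨u,v⟩|) (|⟨u,x⟩|² + |⟨v,x⟩|²) ≤ (1 + |⟨u,v⟩|) ‖(…) x‖ ‖x‖`,
so each pair has norm at most `1 + 1/√d` and the bound follows from the triangle inequality.
A unit vector attaining `2(1 + 1/√d)` (it exists in finite dimension) makes both inequalities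
equalities for both pairs, so it is a top eigenvector of each: a multiple of `|0⟩ + |I⟩` and of
`|h⟩ + (phase)|σ⟩`. The first has its largest entry at `0`, the second at `h`, so `h = 0`; then
the two vectors coincide, which forces `|σ⟩ = |I⟩`, i.e. `σ = 0`.
-/

open scoped InnerProductSpace ComplexConjugate

theorem ContinuousLinearMap.exists_norm_eq_one_norm_apply_eq_opNorm {𝕜 E F : Type*} [RCLike 𝕜]
    [NormedAddCommGroup E] [NormedSpace 𝕜 E] [FiniteDimensional 𝕜 E] [Nontrivial E]
    [SeminormedAddCommGroup F] [NormedSpace 𝕜 F] (T : E →L[𝕜] F) :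
    ∃ x : E, ‖x‖ = 1 ∧ ‖T x‖ = ‖T‖ := by
  have := FiniteDimensional.proper_rclike 𝕜 E
  obtain ⟨⟨x, hx⟩⟩ := NormedSpace.sphere_nonempty_rclike 𝕜 (E := E) zero_le_one
  obtain ⟨x, hx, hmax⟩ := (isCompact_sphere (0 : E) 1).exists_isMaxOn ⟨x, hx⟩
    T.continuous.norm.continuousOn
  rw [mem_sphere_zero_iff_norm] at hx
  refine ⟨x, hx, le_antisymm (by simpa [hx] using T.le_opNorm x) ?_⟩
  exact T.opNorm_le_of_unit_norm (norm_nonneg _) fun y hy => hmax (mem_sphere_zero_iff_norm.2 hy)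

theorem ContinuousLinearMap.norm_le_opNorm_of_hasEigenvalue {𝕜 E : Type*} [RCLike 𝕜]
    [NormedAddCommGroup E] [NormedSpace 𝕜 E] {T : E →L[𝕜] E} {μ : 𝕜}
    (hμ : Module.End.HasEigenvalue (T : E →ₗ[𝕜] E) μ) : ‖μ‖ ≤ ‖T‖ := by
  obtain ⟨v, hv⟩ := hμ.exists_hasEigenvector
  have hv0 : 0 < ‖v‖ := norm_pos_iff.2 hv.2
  refine le_of_mul_le_mul_right ?_ hv0
  calc ‖μ‖ * ‖v‖ = ‖T v‖ := by rw [← norm_smul, ← hv.apply_eq_smul]; rfl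
    _ ≤ ‖T‖ * ‖v‖ := T.le_opNorm v

section RankOnePair

variable {E : Type*} [NormedAddCommGroup E] [InnerProductSpace ℂ E]

theorem rankOneProj_apply (u x : E) : rankOneProj u x = ⟪u, x⟫_ℂ • u := rfl

theorem inner_rankOneProj_add_apply_self (u v x : E) :
    ⟪(rankOneProj u + rankOneProj v) x, x⟫_ℂ
      = ((‖⟪u, x⟫_ℂ‖ ^ 2 + ‖⟪v, x⟫_ℂ‖ ^ 2 : ℝ) : ℂ) := by
  simp only [add_apply, rankOneProj_apply, inner_add_left,
    inner_smul_left, Complex.conj_mul']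
  push_cast; ring

theorem sum_sq_norm_inner_le (u v x : E) :
    ‖⟪u, x⟫_ℂ‖ ^ 2 + ‖⟪v, x⟫_ℂ‖ ^ 2 ≤ ‖(rankOneProj u + rankOneProj v) x‖ * ‖x‖ := by
  have h := norm_inner_le_norm (𝕜 := ℂ) ((rankOneProj u + rankOneProj v) x) x
  rwa [inner_rankOneProj_add_apply_self, Complex.norm_real, Real.norm_of_nonneg (by positivity)]
    at h

variable {u v : E}

theorem norm_sq_smul_add_smul (hu : ‖u‖ = 1) (hv : ‖v‖ = 1) (a b : ℂ) :
    ‖a • u + b • v‖ ^ 2 = ‖a‖ ^ 2 + ‖b‖ ^ 2 + 2 * (conj a * b * ⟪u, v⟫_ℂ).re := by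
  rw [norm_add_sq (𝕜 := ℂ), inner_smul_left, inner_smul_right, norm_smul, norm_smul, hu, hv,
    RCLike.re_to_complex]
  ring_nf

theorem norm_sq_rankOneProj_add_apply_le (hu : ‖u‖ = 1) (hv : ‖v‖ = 1) (x : E) :
    ‖(rankOneProj u + rankOneProj v) x‖ ^ 2
      ≤ (1 + ‖⟪u, v⟫_ℂ‖) * (‖⟪u, x⟫_ℂ‖ ^ 2 + ‖⟪v, x⟫_ℂ‖ ^ 2) := by
  set a := ⟪u, x⟫_ℂ
  set b := ⟪v, x⟫_ℂ
  have hre : (conj a * b * ⟪u, v⟫_ℂ).re ≤ ‖a‖ * ‖b‖ * ‖⟪u, v⟫_ℂ‖ := by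
    simpa using Complex.re_le_norm (conj a * b * ⟪u, v⟫_ℂ)
  have h := norm_sq_smul_add_smul hu hv a b
  simp only [add_apply, rankOneProj_apply]
  nlinarith [sq_nonneg (‖a‖ - ‖b‖), norm_nonneg ⟪u, v⟫_ℂ]

theorem norm_rankOneProj_add_apply_le (hu : ‖u‖ = 1) (hv : ‖v‖ = 1) (x : E) :
    ‖(rankOneProj u + rankOneProj v) x‖ ≤ (1 + ‖⟪u, v⟫_ℂ‖) * ‖x‖ := by
  set w := (rankOneProj u + rankOneProj v) x
  have hsq := norm_sq_rankOneProj_add_apply_le hu hv x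
  have hS := sum_sq_norm_inner_le u v x
  rcases (norm_nonneg w).eq_or_lt with hw | hw
  · rw [← hw]; positivity
  · nlinarith [norm_nonneg ⟪u, v⟫_ℂ]

theorem norm_rankOneProj_add_le (hu : ‖u‖ = 1) (hv : ‖v‖ = 1) :
    ‖rankOneProj u + rankOneProj v‖ ≤ 1 + ‖⟪u, v⟫_ℂ‖ :=
  ContinuousLinearMap.opNorm_le_bound _ (by positivity) (norm_rankOneProj_add_apply_le hu hv)

theorem rankOneProj_add_apply_eq_of_norm_eq (hu : ‖u‖ = 1) (hv : ‖v‖ = 1) {x : E}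
    (hx : ‖x‖ = 1) (h : ‖(rankOneProj u + rankOneProj v) x‖ = 1 + ‖⟪u, v⟫_ℂ‖) :
    (rankOneProj u + rankOneProj v) x = ((1 + ‖⟪u, v⟫_ℂ‖ : ℝ) : ℂ) • x := by
  set w := (rankOneProj u + rankOneProj v) x
  have hsq := norm_sq_rankOneProj_add_apply_le hu hv x
  have hS := sum_sq_norm_inner_le u v x
  rw [h] at hsq hS
  rw [hx] at hS
  have ht := norm_nonneg ⟪u, v⟫_ℂ
  have hS_eq : ‖⟪u, x⟫_ℂ‖ ^ 2 + ‖⟪v, x⟫_ℂ‖ ^ 2 = 1 + ‖⟪u, v⟫_ℂ‖ := by nlinarith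
  have hinner : ⟪w, x⟫_ℂ = (‖w‖ : ℂ) * ‖x‖ := by
    rw [inner_rankOneProj_add_apply_self, hS_eq, h, hx]; simp
  simpa [hx, h] using inner_eq_norm_mul_iff.1 hinner

/-- For unit vectors with `⟨u, v⟩ ≠ 0`, this spans the top eigenspace of `|u⟩⟨u| + |v⟩⟨v|`
(eigenvalue `1 + |⟨u, v⟩|`). -/
noncomputable def pairTopVec (u v : E) : E := u + ((‖⟪u, v⟫_ℂ‖ : ℂ) / ⟪u, v⟫_ℂ) • v

theorem rankOneProj_add_apply_pairTopVec (hu : ‖u‖ = 1) (hv : ‖v‖ = 1) :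
    (rankOneProj u + rankOneProj v) (pairTopVec u v)
      = ((1 + ‖⟪u, v⟫_ℂ‖ : ℝ) : ℂ) • pairTopVec u v := by
  have huu : ⟪u, u⟫_ℂ = 1 := by simp [inner_self_eq_norm_sq_to_K, hu]
  have hvv : ⟪v, v⟫_ℂ = 1 := by simp [inner_self_eq_norm_sq_to_K, hv]
  set c := ⟪u, v⟫_ℂ with hc
  have hvu : ⟪v, u⟫_ℂ = conj c := (inner_conj_symm v u).symm
  simp only [pairTopVec, add_apply, rankOneProj_apply, inner_add_right, inner_smul_right,
    huu, hvv, hvu, ← hc]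
  rcases eq_or_ne c 0 with h0 | h0
  · simp [h0]
  · have hconj : conj c = (‖c‖ : ℂ) ^ 2 / c := by
      rw [← Complex.mul_conj', mul_div_cancel_left₀ _ h0]
    rw [hconj]
    push_cast
    field_simp
    module

theorem eq_smul_pairTopVec_of_rankOneProj_add_apply_eq (hu : ‖u‖ = 1) (hc : ⟪u, v⟫_ℂ ≠ 0)
    {x : E} (h : (rankOneProj u + rankOneProj v) x = ((1 + ‖⟪u, v⟫_ℂ‖ : ℝ) : ℂ) • x) :
    x = ((1 + ‖⟪u, v⟫_ℂ‖ : ℂ)⁻¹ * ⟪u, x⟫_ℂ) • pairTopVec u v := by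
  have huu : ⟪u, u⟫_ℂ = 1 := by simp [inner_self_eq_norm_sq_to_K, hu]
  have ht : (1 + ‖⟪u, v⟫_ℂ‖ : ℂ) ≠ 0 := by exact_mod_cast (by positivity : (1 + ‖⟪u, v⟫_ℂ‖) ≠ 0)
  -- pairing the eigenvalue equation with `u` determines `⟨v, x⟩`
  have hb : ⟪v, x⟫_ℂ * ⟪u, v⟫_ℂ = ‖⟪u, v⟫_ℂ‖ * ⟪u, x⟫_ℂ := by
    have := congrArg (fun y => ⟪u, y⟫_ℂ) h
    simp only [add_apply, rankOneProj_apply, inner_add_right, inner_smul_right, huu] at this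
    push_cast at this
    linear_combination this
  have hx : x = (1 + ‖⟪u, v⟫_ℂ‖ : ℂ)⁻¹ • (⟪u, x⟫_ℂ • u + ⟪v, x⟫_ℂ • v) := by
    rw [← rankOneProj_apply, ← rankOneProj_apply, ← add_apply, h]
    push_cast
    rw [smul_smul, inv_mul_cancel₀ ht, one_smul]
  rw [eq_div_of_mul_eq hc hb] at hx
  refine hx.trans ?_
  simp only [pairTopVec]
  field_simp
  module

theorem exists_eq_smul_pairTopVec_of_norm_eq (hu : ‖u‖ = 1) (hv : ‖v‖ = 1)
    (hc : ⟪u, v⟫_ℂ ≠ 0) {x : E} (hx : ‖x‖ = 1)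
    (h : ‖(rankOneProj u + rankOneProj v) x‖ = 1 + ‖⟪u, v⟫_ℂ‖) :
    ∃ ν : ℂ, x = ν • pairTopVec u v :=
  ⟨_, eq_smul_pairTopVec_of_rankOneProj_add_apply_eq hu hc
    (rankOneProj_add_apply_eq_of_norm_eq hu hv hx h)⟩

end RankOnePair

section Fourier

variable (d : ℕ) [NeZero d]

theorem sqrt_natCast_pos : 0 < Real.sqrt d :=
  Real.sqrt_pos.2 (Nat.cast_pos.2 (Nat.pos_of_neZero d))

theorem basisVec_apply (h j : ZMod d) : basisVec d h j = if j = h then 1 else 0 := by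
  rw [basisVec, PiLp.single_apply]

theorem inner_basisVec_left (h : ZMod d) (y : EuclideanSpace ℂ (ZMod d)) :
    ⟪basisVec d h, y⟫_ℂ = y h := by
  simp [basisVec, EuclideanSpace.inner_single_left]

theorem norm_basisVec (h : ZMod d) : ‖basisVec d h‖ = 1 := by
  simp [basisVec]

theorem fourierV_apply (σ j : ZMod d) :
    fourierV d σ j = (1 / Real.sqrt d : ℂ)
      * Complex.exp (2 * Real.pi * Complex.I / d) ^ (σ.val * j.val) := rfl

theorem fourierV_apply_zero (σ : ZMod d) : fourierV d σ 0 = (1 / Real.sqrt d : ℂ) := by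
  simp [fourierV_apply]

theorem norm_fourierV_apply (σ j : ZMod d) : ‖fourierV d σ j‖ = 1 / Real.sqrt d := by
  have hω := (Complex.isPrimitiveRoot_exp d (NeZero.ne d)).norm'_eq_one (NeZero.ne d)
  rw [fourierV_apply, norm_mul, norm_pow, hω, one_pow, mul_one, norm_div, norm_one,
    Complex.norm_real, Real.norm_of_nonneg (Real.sqrt_nonneg _)]

theorem norm_fourierV (σ : ZMod d) : ‖fourierV d σ‖ = 1 := by
  have hd : (0 : ℝ) < d := by exact_mod_cast Nat.pos_of_neZero d
  rw [EuclideanSpace.norm_eq]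
  simp [norm_fourierV_apply, Real.sq_sqrt hd.le, ZMod.card, hd.ne']

theorem fourierV_injective : Function.Injective (fourierV d) := by
  intro σ τ hστ
  rcases subsingleton_or_nontrivial (ZMod d) with _ | _
  · exact Subsingleton.elim σ τ
  have hd : 1 < d := by
    have := ZMod.nontrivial_iff.1 ‹_›; have := NeZero.ne d; omega
  have : Fact (1 < d) := ⟨hd⟩
  have h1 := congrArg (fun f : EuclideanSpace ℂ (ZMod d) => f 1) hστ
  simp only [fourierV_apply, ZMod.val_one, mul_one] at h1
  have hs : (1 / Real.sqrt d : ℂ) ≠ 0 := by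
    simpa using (sqrt_natCast_pos d).ne'
  exact ZMod.val_injective d <| (Complex.isPrimitiveRoot_exp d (NeZero.ne d)).pow_inj
    (ZMod.val_lt σ) (ZMod.val_lt τ) (mul_left_cancel₀ hs h1)

theorem norm_inner_basisVec_fourierV (h σ : ZMod d) :
    ‖⟪basisVec d h, fourierV d σ⟫_ℂ‖ = 1 / Real.sqrt d := by
  rw [inner_basisVec_left, norm_fourierV_apply]

theorem inner_basisVec_fourierV_ne_zero (h σ : ZMod d) : ⟪basisVec d h, fourierV d σ⟫_ℂ ≠ 0 := by
  rw [← norm_ne_zero_iff, norm_inner_basisVec_fourierV]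
  exact (one_div_pos.2 (sqrt_natCast_pos d)).ne'

theorem pairTopVec_basisVec_fourierV_apply (h σ j : ZMod d) :
    pairTopVec (basisVec d h) (fourierV d σ) j
      = basisVec d h j + ((1 / Real.sqrt d : ℝ) : ℂ) / fourierV d σ h * fourierV d σ j := by
  simp only [pairTopVec, inner_basisVec_left, norm_fourierV_apply]
  rfl

theorem pairTopVec_basisVec_fourierV_apply_self (h σ : ZMod d) :
    pairTopVec (basisVec d h) (fourierV d σ) h = 1 + ((1 / Real.sqrt d : ℝ) : ℂ) := by
  have hc := inner_basisVec_fourierV_ne_zero d h σ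
  rw [inner_basisVec_left] at hc
  rw [pairTopVec_basisVec_fourierV_apply, basisVec_apply, if_pos rfl, div_mul_cancel₀ _ hc]

theorem norm_pairTopVec_basisVec_fourierV_apply_of_ne {h j : ZMod d} (σ : ZMod d) (hj : j ≠ h) :
    ‖pairTopVec (basisVec d h) (fourierV d σ) j‖ = 1 / Real.sqrt d := by
  have hs := sqrt_natCast_pos d
  rw [pairTopVec_basisVec_fourierV_apply, basisVec_apply, if_neg hj, zero_add, norm_mul,
    norm_div, norm_fourierV_apply, norm_fourierV_apply, Complex.norm_real,
    Real.norm_of_nonneg (by positivity)]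
  field_simp

theorem pairTopVec_basisVec_zero (σ : ZMod d) :
    pairTopVec (basisVec d 0) (fourierV d σ) = basisVec d 0 + fourierV d σ := by
  have hs : ((1 / Real.sqrt d : ℝ) : ℂ) ≠ 0 := by
    exact_mod_cast (one_div_pos.2 (sqrt_natCast_pos d)).ne'
  rw [pairTopVec, norm_inner_basisVec_fourierV, inner_basisVec_left, fourierV_apply_zero]
  push_cast at hs ⊢
  rw [div_self hs, one_smul]

end Fourier

section BlockHam

variable (d : ℕ) [NeZero d]

theorem blockHam_eq (h σ : ZMod d) :
    blockHam d h σ = -((rankOneProj (basisVec d 0) + rankOneProj (fourierV d 0))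
      + (rankOneProj (basisVec d h) + rankOneProj (fourierV d σ))) := by
  rw [blockHam]
  abel

theorem norm_rankOneProj_basisVec_add_fourierV_le (h σ : ZMod d) :
    ‖rankOneProj (basisVec d h) + rankOneProj (fourierV d σ)‖ ≤ 1 + 1 / Real.sqrt d := by
  simpa only [norm_inner_basisVec_fourierV] using
    norm_rankOneProj_add_le (norm_basisVec d h) (norm_fourierV d σ)

theorem norm_blockHam_le (h σ : ZMod d) : ‖blockHam d h σ‖ ≤ 2 * (1 + 1 / Real.sqrt d) := by
  rw [blockHam_eq, norm_neg, two_mul]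
  exact (norm_add_le _ _).trans (add_le_add (norm_rankOneProj_basisVec_add_fourierV_le d 0 0)
    (norm_rankOneProj_basisVec_add_fourierV_le d h σ))

theorem blockHam_zero_zero_apply :
    blockHam d 0 0 (basisVec d 0 + fourierV d 0)
      = ((-(2 * (1 + 1 / Real.sqrt d)) : ℝ) : ℂ) • (basisVec d 0 + fourierV d 0) := by
  have hA := rankOneProj_add_apply_pairTopVec (norm_basisVec d 0) (norm_fourierV d 0)
  rw [pairTopVec_basisVec_zero, norm_inner_basisVec_fourierV] at hA
  rw [blockHam_eq, neg_apply, add_apply, hA]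
  push_cast
  module

theorem norm_blockHam_zero_zero : ‖blockHam d 0 0‖ = 2 * (1 + 1 / Real.sqrt d) := by
  refine (norm_blockHam_le d 0 0).antisymm ?_
  have hx : basisVec d 0 + fourierV d 0 ≠ 0 := by
    intro h0
    have h00 := pairTopVec_basisVec_fourierV_apply_self d 0 0
    rw [pairTopVec_basisVec_zero, h0] at h00
    have hne : (1 : ℂ) + ((1 / Real.sqrt d : ℝ) : ℂ) ≠ 0 := by
      exact_mod_cast (by positivity : (1 + 1 / Real.sqrt d) ≠ 0)
    exact hne h00.symm
  have hle := (blockHam d 0 0).le_opNorm (basisVec d 0 + fourierV d 0)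
  rw [blockHam_zero_zero_apply, norm_smul, Complex.norm_real, Real.norm_eq_abs, abs_neg,
    abs_of_pos (by positivity)] at hle
  exact le_of_mul_le_mul_right hle (norm_pos_iff.2 hx)

/-- In modulus, the top vector of the `(0, τ)` pair is largest at `0` and that of the `(h, σ)`
pair at `h`. -/
theorem eq_zero_of_smul_pairTopVec_eq {h σ τ : ZMod d} {ν ν' : ℂ} (hν' : ν' ≠ 0)
    (hx : ν • pairTopVec (basisVec d 0) (fourierV d τ)
      = ν' • pairTopVec (basisVec d h) (fourierV d σ)) : h = 0 := by
  by_contra hh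
  have ht : 0 < 1 / Real.sqrt d := one_div_pos.2 (sqrt_natCast_pos d)
  have hnorm (j : ZMod d) : ‖ν‖ * ‖pairTopVec (basisVec d 0) (fourierV d τ) j‖
      = ‖ν'‖ * ‖pairTopVec (basisVec d h) (fourierV d σ) j‖ := by
    simpa only [PiLp.smul_apply, smul_eq_mul, norm_mul] using congrArg (fun y => ‖y j‖) hx
  have h1t : ‖1 + ((1 / Real.sqrt d : ℝ) : ℂ)‖ = 1 + 1 / Real.sqrt d := by
    rw [← Complex.ofReal_one, ← Complex.ofReal_add, Complex.norm_real,
      Real.norm_of_nonneg (by positivity)]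
  have h0 := hnorm 0
  have hh' := hnorm h
  rw [pairTopVec_basisVec_fourierV_apply_self, h1t,
    norm_pairTopVec_basisVec_fourierV_apply_of_ne d σ (Ne.symm hh)] at h0
  rw [pairTopVec_basisVec_fourierV_apply_self, h1t,
    norm_pairTopVec_basisVec_fourierV_apply_of_ne d τ hh] at hh'
  nlinarith [norm_pos_iff.2 hν']

theorem eq_zero_of_norm_blockHam_eq {h σ : ZMod d}
    (hH : ‖blockHam d h σ‖ = 2 * (1 + 1 / Real.sqrt d)) : h = 0 ∧ σ = 0 := by
  obtain ⟨x, hx, hHx⟩ := (blockHam d h σ).exists_norm_eq_one_norm_apply_eq_opNorm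
  set A := rankOneProj (basisVec d 0) + rankOneProj (fourierV d 0)
  set B := rankOneProj (basisVec d h) + rankOneProj (fourierV d σ)
  have hAB : ‖A x + B x‖ = 2 * (1 + 1 / Real.sqrt d) := by
    rw [← hH, ← hHx, blockHam_eq, neg_apply, norm_neg]
    rfl
  have hA := norm_rankOneProj_add_apply_le (norm_basisVec d 0) (norm_fourierV d 0) x
  have hB := norm_rankOneProj_add_apply_le (norm_basisVec d h) (norm_fourierV d σ) x
  rw [norm_inner_basisVec_fourierV, hx, mul_one] at hA hB
  have htri := norm_add_le (A x) (B x)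
  obtain ⟨ν, hν⟩ := exists_eq_smul_pairTopVec_of_norm_eq (norm_basisVec d 0)
    (norm_fourierV d 0) (inner_basisVec_fourierV_ne_zero d 0 0) hx
    (by rw [norm_inner_basisVec_fourierV]; linarith)
  obtain ⟨ν', hν'⟩ := exists_eq_smul_pairTopVec_of_norm_eq (norm_basisVec d h)
    (norm_fourierV d σ) (inner_basisVec_fourierV_ne_zero d h σ) hx
    (by rw [norm_inner_basisVec_fourierV]; linarith)
  have hν'0 : ν' ≠ 0 := by
    rintro rfl
    rw [zero_smul] at hν'
    simp [hν'] at hx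
  have hνν' := hν.symm.trans hν'
  obtain rfl : h = 0 := eq_zero_of_smul_pairTopVec_eq d hν'0 hνν'
  have hν_eq : ν = ν' := by
    have h0 := congrArg (fun y => y 0) hνν'
    simp only [PiLp.smul_apply, smul_eq_mul, pairTopVec_basisVec_fourierV_apply_self] at h0
    refine mul_right_cancel₀ ?_ h0
    exact_mod_cast (by positivity : (1 + 1 / Real.sqrt d) ≠ 0)
  rw [hν_eq, pairTopVec_basisVec_zero, pairTopVec_basisVec_zero] at hνν'
  have hf : fourierV d 0 = fourierV d σ :=
    add_left_cancel (smul_right_injective (EuclideanSpace ℂ (ZMod d)) hν'0 hνν')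
  exact ⟨rfl, (fourierV_injective d hf).symm⟩

end BlockHam

theorem blockHam_norm_bound (d : ℕ) [NeZero d] :
    (∀ h σ : ZMod d, ‖blockHam d h σ‖ ≤ 2 * (1 + 1 / Real.sqrt d)) ∧
    (∀ h σ : ZMod d,
      (‖blockHam d h σ‖ = 2 * (1 + 1 / Real.sqrt d) ↔ h = 0 ∧ σ = 0)) ∧
    blockHam d 0 0 (basisVec d 0 + fourierV d 0)
      = ((-(2 * (1 + 1 / Real.sqrt d)) : ℝ) : ℂ)
          • (basisVec d 0 + fourierV d 0) ∧
    (∀ μ : ℂ, Module.End.HasEigenvalue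
        ((blockHam d 0 0 : EuclideanSpace ℂ (ZMod d) →ₗ[ℂ]
          EuclideanSpace ℂ (ZMod d))) μ →
      -(2 * (1 + 1 / Real.sqrt d)) ≤ μ.re) := by
  refine ⟨norm_blockHam_le d, fun h σ => ⟨eq_zero_of_norm_blockHam_eq d, ?_⟩,
    blockHam_zero_zero_apply d, fun μ hμ => ?_⟩
  · rintro ⟨rfl, rfl⟩
    exact norm_blockHam_zero_zero d
  · have hμ_le := (ContinuousLinearMap.norm_le_opNorm_of_hasEigenvalue hμ).trans
      (norm_blockHam_le d 0 0)
    linarith [neg_abs_le μ.re, Complex.abs_re_le_norm μ]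
end

section
/- Let G be a finite group, and on (ℂ[G])^{⊗4} define S_L^g = L_-^{g^{-1}} ⊗ L_-^{g^{-1}} ⊗ L_+^{g^{-1}} ⊗ L_+^{g^{-1}} and S_T^h = Σ_{g_1g_2g_3g_4 = h} T_-^{g_1} ⊗ T_+^{g_2} ⊗ T_+^{g_3} ⊗ T_-^{g_4}. Then S_L^g S_T^h = S_T^{g^{-1}hg} S_L^g for all g, h ∈ G (the quantum double algebra relation). -/
open Matrix

variable {G : Type*}

/-- The stabilizer `S_L^g = L₋^{g⁻¹} ⊗ L₋^{g⁻¹} ⊗ L₊^{g⁻¹} ⊗ L₊^{g⁻¹}` on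
`(ℂ[G])^{⊗4}`, where `L₊^g|k⟩ = |gk⟩` and `L₋^g|k⟩ = |kg⁻¹⟩`. -/
noncomputable def stabL [Group G] [DecidableEq G] (g : G) :
    Matrix (G × G × G × G) (G × G × G × G) ℂ :=
  fun a b =>
    if a.1 = b.1 * g ∧ a.2.1 = b.2.1 * g ∧ a.2.2.1 = g⁻¹ * b.2.2.1
        ∧ a.2.2.2 = g⁻¹ * b.2.2.2
    then 1 else 0

/-- The stabilizer `S_T^h = Σ_{g₁g₂g₃g₄ = h} T₋^{g₁} ⊗ T₊^{g₂} ⊗ T₊^{g₃} ⊗ T₋^{g₄}`,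
where `T₊^g = |g⟩⟨g|` and `T₋^g = |g⁻¹⟩⟨g⁻¹|`; it is diagonal with entry `1` at
`(k₁,k₂,k₃,k₄)` iff `k₁⁻¹ k₂ k₃ k₄⁻¹ = h`. -/
noncomputable def stabT [Group G] [DecidableEq G] (h : G) :
    Matrix (G × G × G × G) (G × G × G × G) ℂ :=
  Matrix.diagonal fun k =>
    if k.1⁻¹ * k.2.1 * k.2.2.1 * k.2.2.2⁻¹ = h then 1 else 0

/-! `S_L^g` is the permutation matrix of `k ↦ (k₁ g, k₂ g, g⁻¹ k₃, g⁻¹ k₄)`, which conjugates the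
word `k₁⁻¹ k₂ k₃ k₄⁻¹` by `g`; since `S_T^h` is the diagonal indicator of that word being `h`,
moving it across `S_L^g` replaces `h` by `g⁻¹ h g`. -/

theorem Matrix.mul_diagonal_eq_diagonal_mul {m n α : Type*} [Fintype m] [Fintype n]
    [DecidableEq m] [DecidableEq n] [CommSemiring α] {M : Matrix m n α} {d : n → α}
    {d' : m → α} (h : ∀ a b, M a b ≠ 0 → d b = d' a) :
    M * diagonal d = diagonal d' * M := by
  ext a b
  rw [mul_diagonal, diagonal_mul]
  by_cases hab : M a b = 0
  · simp [hab]
  · rw [h a b hab, mul_comm]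

theorem word_eq_conj_of_stabL_ne_zero [Group G] [DecidableEq G] {g : G} {a b : G × G × G × G}
    (hab : stabL g a b ≠ 0) :
    a.1⁻¹ * a.2.1 * a.2.2.1 * a.2.2.2⁻¹ = g⁻¹ * (b.1⁻¹ * b.2.1 * b.2.2.1 * b.2.2.2⁻¹) * g := by
  obtain ⟨h₁, h₂, h₃, h₄⟩ : a.1 = b.1 * g ∧ a.2.1 = b.2.1 * g ∧ a.2.2.1 = g⁻¹ * b.2.2.1
      ∧ a.2.2.2 = g⁻¹ * b.2.2.2 := by
    by_contra hc
    exact hab (if_neg hc)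
  rw [h₁, h₂, h₃, h₄]
  group

/-- The quantum double algebra relation `S_L^g S_T^h = S_T^{g⁻¹ h g} S_L^g`. -/
theorem quantum_double_algebra_relation [Group G] [Fintype G] [DecidableEq G]
    (g h : G) : stabL g * stabT h = stabT (g⁻¹ * h * g) * stabL g := by
  refine mul_diagonal_eq_diagonal_mul fun a b hab => ?_
  simp only [word_eq_conj_of_stabL_ne_zero hab, mul_left_cancel_iff, mul_right_cancel_iff]
end
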